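/- Let $N, D$ be natural numbers with $1 \le D < N$, let $L > 0$, and for each $1 \le l \le N$ let $k_l : [0,L] \to \mathbb{R}$ be continuous with $k_l > 0$ for $l \le D$ and $k_l < 0$ for $l > D$, and let $I_l, S_l > 0$ satisfy $I_l \le |k_l(x)| \le S_l$ for all $x \in [0,L]$. Assume $\big(\max_{D+1 \le l \le N} S_l\big) \big(\sum_{l=1}^{D} 1/I_l\big) < \frac{D^2}{N-D}$. Then there exists $C > 0$ such that for all continuous functions $g_1, \dots, g_N : [0,L] \to \mathbb{R}$: $\sum_{l=1}^{N} \int_0^L |k_l(x)| g_l(x)^2 \, dx \; - \; \frac{2}{D} \sum_{l=D+1}^{N} \sum_{j=1}^{D} \int_0^L |k_l(x)| g_l(x) g_j(x) \, dx \;\ge\; C \sum_{l=1}^{N} \int_0^L g_l(x)^2 \, dx$. -/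

import Mathlib

/-!
Pointwise in `x`, write `κ = |k(x)|`, `a = g(x)` and `b = ∑_{j ≤ D} a_j`. Young's inequality
with a parameter `s > 0` bounds the cross term `(2/D) ∑_{l > D} κ_l a_l b` by
`(s/D) ∑_{l > D} κ_l a_l² + ((N - D) M / (D s)) b²`, where `M = max_{l > D} S_l`, and the weighted
Cauchy–Schwarz inequality gives `b² ≤ (∑_{j ≤ D} 1/I_j) ∑_{j ≤ D} κ_j a_j²`. The smallness
hypothesis says precisely that `q = (N - D) M (∑_{j ≤ D} 1/I_j) / D < D`, so any `s ∈ (q, D)`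
leaves a positive fraction of `∑_l κ_l a_l² ≥ (min_l I_l) ∑_l a_l²`. Integrating over `[0, L]`
gives the estimate.
-/

open Finset

section QuadraticForm

variable {ι : Type*}

/-- The integrand of `a_k(ψ, T₁ψ)` at a point, with `κ = |k|`, `a = ∂ₓψ`, `A` the branches where
`k > 0` and `B` those where `k < 0`; the paper takes `d = #A = D`. -/
noncomputable def tForm (d : ℝ) (A B : Finset ι) (κ a : ι → ℝ) : ℝ :=
  (∑ j ∈ A, κ j * a j ^ 2) + (∑ l ∈ B, κ l * a l ^ 2) - 2 / d * ∑ l ∈ B, ∑ j ∈ A, κ l * a l * a j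

lemma sq_sum_le_sum_one_div_mul_sum_mul_sq (s : Finset ι) {w : ι → ℝ} (a : ι → ℝ)
    (hw : ∀ i ∈ s, 0 < w i) :
    (∑ i ∈ s, a i) ^ 2 ≤ (∑ i ∈ s, 1 / w i) * ∑ i ∈ s, w i * a i ^ 2 :=
  sum_sq_le_sum_mul_sum_of_sq_le_mul s (fun i hi => (one_div_pos.2 (hw i hi)).le)
    (fun i hi => mul_nonneg (hw i hi).le (sq_nonneg _))
    (fun i hi => by rw [← mul_assoc, one_div_mul_cancel (hw i hi).ne', one_mul])

lemma two_mul_le_mul_sq_add_sq_div {s : ℝ} (hs : 0 < s) (x y : ℝ) :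
    2 * x * y ≤ s * x ^ 2 + y ^ 2 / s := by
  have h : s * x ^ 2 + y ^ 2 / s - 2 * x * y = (s * x - y) ^ 2 / s := by
    field_simp; ring
  have : 0 ≤ (s * x - y) ^ 2 / s := by positivity
  linarith

lemma two_mul_sum_sum_le (A B : Finset ι) (κ a : ι → ℝ) {M s : ℝ} (hs : 0 < s)
    (hκ : ∀ l ∈ B, 0 ≤ κ l ∧ κ l ≤ M) :
    2 * ∑ l ∈ B, ∑ j ∈ A, κ l * a l * a j ≤
      s * (∑ l ∈ B, κ l * a l ^ 2) + #B * M / s * (∑ j ∈ A, a j) ^ 2 := by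
  set b := ∑ j ∈ A, a j
  have hyoung : ∀ l ∈ B, 2 * (κ l * a l * b) ≤ s * (κ l * a l ^ 2) + M / s * b ^ 2 := by
    intro l hl
    obtain ⟨hκ0, hκM⟩ := hκ l hl
    calc 2 * (κ l * a l * b) = κ l * (2 * a l * b) := by ring
      _ ≤ κ l * (s * a l ^ 2 + b ^ 2 / s) := by
        gcongr; exact two_mul_le_mul_sq_add_sq_div hs _ _
      _ = s * (κ l * a l ^ 2) + κ l * (b ^ 2 / s) := by ring
      _ ≤ s * (κ l * a l ^ 2) + M * (b ^ 2 / s) := by gcongr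
      _ = s * (κ l * a l ^ 2) + M / s * b ^ 2 := by ring
  calc 2 * ∑ l ∈ B, ∑ j ∈ A, κ l * a l * a j = ∑ l ∈ B, 2 * (κ l * a l * b) := by
        simp only [b, mul_sum]
    _ ≤ ∑ l ∈ B, (s * (κ l * a l ^ 2) + M / s * b ^ 2) := sum_le_sum hyoung
    _ = s * (∑ l ∈ B, κ l * a l ^ 2) + #B * M / s * b ^ 2 := by
        rw [sum_add_distrib, ← mul_sum, sum_const, nsmul_eq_mul]; ring

lemma le_tForm (A B : Finset ι) {I κ : ι → ℝ} (a : ι → ℝ) {d s M : ℝ} (hd : 0 < d)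
    (hs : 0 < s) (hM : 0 ≤ M) (hA : ∀ j ∈ A, 0 < I j ∧ I j ≤ κ j)
    (hB : ∀ l ∈ B, 0 ≤ κ l ∧ κ l ≤ M) :
    (1 - #B * M * (∑ j ∈ A, 1 / I j) / (d * s)) * (∑ j ∈ A, κ j * a j ^ 2)
      + (1 - s / d) * (∑ l ∈ B, κ l * a l ^ 2) ≤ tForm d A B κ a := by
  set T := ∑ j ∈ A, 1 / I j
  set P := ∑ j ∈ A, κ j * a j ^ 2
  set Q := ∑ l ∈ B, κ l * a l ^ 2
  have hcs : (∑ j ∈ A, a j) ^ 2 ≤ T * P := by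
    refine (sq_sum_le_sum_one_div_mul_sum_mul_sq A a fun j hj => (hA j hj).1).trans
      (mul_le_mul_of_nonneg_left (sum_le_sum fun j hj => ?_) ?_)
    · exact mul_le_mul_of_nonneg_right (hA j hj).2 (sq_nonneg _)
    · exact sum_nonneg fun j hj => (one_div_pos.2 (hA j hj).1).le
  have hcross :
      2 / d * ∑ l ∈ B, ∑ j ∈ A, κ l * a l * a j ≤ s / d * Q + #B * M * T / (d * s) * P :=
    calc 2 / d * ∑ l ∈ B, ∑ j ∈ A, κ l * a l * a j
        = (2 * ∑ l ∈ B, ∑ j ∈ A, κ l * a l * a j) / d := by ring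
      _ ≤ (s * Q + #B * M / s * (T * P)) / d := by
        gcongr
        exact (two_mul_sum_sum_le A B κ a hs hB).trans (by gcongr)
      _ = s / d * Q + #B * M * T / (d * s) * P := by field_simp
  unfold tForm
  linarith

lemma Finset.exists_pos_le_of_forall_pos (s : Finset ι) {f : ι → ℝ} (hf : ∀ i ∈ s, 0 < f i) :
    ∃ m > 0, ∀ i ∈ s, m ≤ f i := by
  rcases s.eq_empty_or_nonempty with rfl | hs
  · exact ⟨1, one_pos, by simp⟩
  · obtain ⟨i, hi, hmin⟩ := s.exists_min_image f hs
    exact ⟨f i, hf i hi, hmin⟩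

theorem exists_pos_mul_le_tForm [DecidableEq ι] (A B : Finset ι) {I : ι → ℝ} {d M : ℝ}
    (hd : 0 < d) (hM : 0 ≤ M) (hI : ∀ i ∈ A ∪ B, 0 < I i)
    (hsmall : #B * M * ∑ j ∈ A, 1 / I j < d ^ 2) :
    ∃ C > 0, ∀ κ a : ι → ℝ, (∀ i ∈ A ∪ B, I i ≤ κ i) → (∀ l ∈ B, κ l ≤ M) →
      C * (∑ j ∈ A, a j ^ 2 + ∑ l ∈ B, a l ^ 2) ≤ tForm d A B κ a := by
  have hIA : ∀ j ∈ A, 0 < I j := fun j hj => hI j (mem_union_left B hj)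
  set q := #B * M * (∑ j ∈ A, 1 / I j) / d with hq
  have hq0 : 0 ≤ q := by
    have := sum_nonneg fun j hj => (one_div_pos.2 (hIA j hj)).le
    positivity
  have hqd : q < d := by rw [hq, div_lt_iff₀ hd]; nlinarith
  set s := (q + d) / 2 with hs_def
  have hs : 0 < s := by positivity
  set ε := min (1 - q / s) (1 - s / d)
  have hε : 0 < ε := lt_min (by rw [sub_pos, div_lt_one hs]; linarith)
    (by rw [sub_pos, div_lt_one hd]; linarith)
  obtain ⟨m, hm, hmI⟩ := (A ∪ B).exists_pos_le_of_forall_pos hI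
  refine ⟨ε * m, by positivity, fun κ a hκ hκM => ?_⟩
  have hmκ : ∀ i ∈ A ∪ B, m ≤ κ i := fun i hi => (hmI i hi).trans (hκ i hi)
  have hlow : ∀ t ⊆ A ∪ B, ∀ c, ε ≤ c →
      ε * m * ∑ i ∈ t, a i ^ 2 ≤ c * ∑ i ∈ t, κ i * a i ^ 2 := by
    intro t ht c hc
    rw [mul_sum, mul_sum]
    refine sum_le_sum fun i hi => ?_
    rw [← mul_assoc]
    exact mul_le_mul_of_nonneg_right (mul_le_mul hc (hmκ i (ht hi)) hm.le (hε.le.trans hc))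
      (sq_nonneg _)
  have key := le_tForm A B a hd hs hM (fun j hj => ⟨hIA j hj, hκ j (mem_union_left B hj)⟩)
    (fun l hl => ⟨(hm.trans_le (hmκ l (mem_union_right A hl))).le, hκM l hl⟩)
  rw [← div_div, ← hq] at key
  calc ε * m * (∑ j ∈ A, a j ^ 2 + ∑ l ∈ B, a l ^ 2)
      = ε * m * ∑ j ∈ A, a j ^ 2 + ε * m * ∑ l ∈ B, a l ^ 2 := mul_add _ _ _
    _ ≤ (1 - q / s) * (∑ j ∈ A, κ j * a j ^ 2) + (1 - s / d) * ∑ l ∈ B, κ l * a l ^ 2 :=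
      add_le_add (hlow A subset_union_left _ (min_le_left _ _))
        (hlow B subset_union_right _ (min_le_right _ _))
    _ ≤ tForm d A B κ a := key

end QuadraticForm

section Integral

open Set intervalIntegral

variable {ι : Type*} [DecidableEq ι] {A B : Finset ι} {κ f : ι → ℝ → ℝ} {a b : ℝ}

lemma continuousOn_tForm (d : ℝ) {s : Set ℝ} (hκ : ∀ i ∈ A ∪ B, ContinuousOn (κ i) s)
    (hf : ∀ i ∈ A ∪ B, ContinuousOn (f i) s) :
    ContinuousOn (fun x => tForm d A B (κ · x) (f · x)) s := by
  have hsq : ∀ i ∈ A ∪ B, ContinuousOn (fun x => κ i x * f i x ^ 2) s :=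
    fun i hi => (hκ i hi).mul ((hf i hi).pow 2)
  refine ((continuousOn_finsetSum A fun j hj => hsq j (Finset.mem_union_left B hj)).add
    (continuousOn_finsetSum B fun l hl => hsq l (Finset.mem_union_right A hl))).sub
    (continuousOn_const.mul (continuousOn_finsetSum B fun l hl => continuousOn_finsetSum A
      fun j hj => ?_))
  exact ((hκ l (Finset.mem_union_right A hl)).mul (hf l (Finset.mem_union_right A hl))).mul
      (hf j (Finset.mem_union_left B hj))

lemma integral_tForm (d : ℝ) (hκ : ∀ i ∈ A ∪ B, ContinuousOn (κ i) (uIcc a b))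
    (hf : ∀ i ∈ A ∪ B, ContinuousOn (f i) (uIcc a b)) :
    ∫ x in a..b, tForm d A B (κ · x) (f · x) =
      (∑ j ∈ A, ∫ x in a..b, κ j x * f j x ^ 2) + (∑ l ∈ B, ∫ x in a..b, κ l x * f l x ^ 2)
        - 2 / d * ∑ l ∈ B, ∑ j ∈ A, ∫ x in a..b, κ l x * f l x * f j x := by
  have hsq : ∀ i ∈ A ∪ B, ContinuousOn (fun x => κ i x * f i x ^ 2) (uIcc a b) :=
    fun i hi => (hκ i hi).mul ((hf i hi).pow 2)
  have hcross : ∀ l ∈ B, ∀ j ∈ A, ContinuousOn (fun x => κ l x * f l x * f j x) (uIcc a b) :=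
    fun l hl j hj => ((hκ l (Finset.mem_union_right A hl)).mul
      (hf l (Finset.mem_union_right A hl))).mul (hf j (Finset.mem_union_left B hj))
  have hcross' : ∀ l ∈ B, ContinuousOn (fun x => ∑ j ∈ A, κ l x * f l x * f j x) (uIcc a b) :=
    fun l hl => continuousOn_finsetSum A (hcross l hl)
  have hsA := continuousOn_finsetSum A fun j hj => hsq j (Finset.mem_union_left B hj)
  have hsB := continuousOn_finsetSum B fun l hl => hsq l (Finset.mem_union_right A hl)
  have hsX := continuousOn_finsetSum B hcross'
  simp only [tForm]
  rw [integral_sub (hsA.intervalIntegrable.add hsB.intervalIntegrable)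
      (hsX.intervalIntegrable.const_mul _),
    integral_add hsA.intervalIntegrable hsB.intervalIntegrable, integral_const_mul,
    integral_finsetSum fun j hj => (hsq j (Finset.mem_union_left B hj)).intervalIntegrable,
    integral_finsetSum fun l hl => (hsq l (Finset.mem_union_right A hl)).intervalIntegrable,
    integral_finsetSum fun l hl => (hcross' l hl).intervalIntegrable]
  congr 2
  exact Finset.sum_congr rfl fun l hl =>
    integral_finsetSum fun j hj => (hcross l hl j hj).intervalIntegrable

lemma mul_add_integral_sq_le_integral_tForm {C d : ℝ} (hab : a ≤ b)
    (hκ : ∀ i ∈ A ∪ B, ContinuousOn (κ i) (uIcc a b))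
    (hf : ∀ i ∈ A ∪ B, ContinuousOn (f i) (uIcc a b))
    (h : ∀ x ∈ Icc a b,
      C * ((∑ j ∈ A, f j x ^ 2) + ∑ l ∈ B, f l x ^ 2) ≤ tForm d A B (κ · x) (f · x)) :
    C * ((∑ j ∈ A, ∫ x in a..b, f j x ^ 2) + ∑ l ∈ B, ∫ x in a..b, f l x ^ 2) ≤
      ∫ x in a..b, tForm d A B (κ · x) (f · x) := by
  have hsq : ∀ i ∈ A ∪ B, ContinuousOn (fun x => f i x ^ 2) (uIcc a b) :=
    fun i hi => (hf i hi).pow 2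
  have hsA := continuousOn_finsetSum A fun j hj => hsq j (Finset.mem_union_left B hj)
  have hsB := continuousOn_finsetSum B fun l hl => hsq l (Finset.mem_union_right A hl)
  rw [← integral_finsetSum fun j hj => (hsq j (Finset.mem_union_left B hj)).intervalIntegrable,
    ← integral_finsetSum fun l hl => (hsq l (Finset.mem_union_right A hl)).intervalIntegrable,
    ← integral_add hsA.intervalIntegrable hsB.intervalIntegrable, ← integral_const_mul]
  exact integral_mono_on hab
    ((hsA.intervalIntegrable.add hsB.intervalIntegrable).const_mul C)
    (continuousOn_tForm d hκ hf).intervalIntegrable h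

end Integral

lemma Nat.sum_Icc_one_eq_add {β : Type*} [AddCommMonoid β] (f : ℕ → β) {D N : ℕ} (h : D ≤ N) :
    ∑ i ∈ Icc 1 N, f i = ∑ i ∈ Icc 1 D, f i + ∑ i ∈ Icc (D + 1) N, f i := by
  have e : ∀ n, Icc 1 n = Ioc 0 n := fun n => by rw [← Icc_add_one_left_eq_Ioc, zero_add]
  rw [e, e, Icc_add_one_left_eq_Ioc, sum_Ioc_consecutive f (Nat.zero_le D) h]

theorem stmt_4 (N D : ℕ) (hD : 1 ≤ D) (hDN : D < N) (L : ℝ) (hL : 0 < L)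
    (k : ℕ → ℝ → ℝ)
    (hkc : ∀ l ∈ Finset.Icc 1 N, ContinuousOn (k l) (Set.Icc 0 L))
    (I S : ℕ → ℝ)
    (hI : ∀ l ∈ Finset.Icc 1 N, 0 < I l) (hS : ∀ l ∈ Finset.Icc 1 N, 0 < S l)
    (hbound : ∀ l ∈ Finset.Icc 1 N, ∀ x ∈ Set.Icc (0 : ℝ) L,
        I l ≤ |k l x| ∧ |k l x| ≤ S l)
    (hmax : ((Finset.Icc (D + 1) N).sup' (Finset.nonempty_Icc.mpr (by omega)) S) *
        (∑ l ∈ Finset.Icc 1 D, 1 / I l) < (D : ℝ) ^ 2 / ((N : ℝ) - (D : ℝ))) :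
    ∃ C : ℝ, 0 < C ∧ ∀ g : ℕ → ℝ → ℝ,
      (∀ l ∈ Finset.Icc 1 N, ContinuousOn (g l) (Set.Icc 0 L)) →
      (∑ l ∈ Finset.Icc 1 N, ∫ x in (0 : ℝ)..L, |k l x| * (g l x) ^ 2)
        - (2 / (D : ℝ)) * (∑ l ∈ Finset.Icc (D + 1) N, ∑ j ∈ Finset.Icc 1 D,
            ∫ x in (0 : ℝ)..L, |k l x| * g l x * g j x)
      ≥ C * ∑ l ∈ Finset.Icc 1 N, ∫ x in (0 : ℝ)..L, (g l x) ^ 2 := by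
  have hU : ∀ i ∈ Icc 1 D ∪ Icc (D + 1) N, i ∈ Icc 1 N := by
    intro i; simp only [mem_union, mem_Icc]; omega
  set M := (Icc (D + 1) N).sup' (nonempty_Icc.mpr (by omega)) S
  have hM : 0 ≤ M := (hS N (mem_Icc.2 ⟨by omega, le_rfl⟩)).le.trans
    (le_sup' S (mem_Icc.2 ⟨by omega, le_rfl⟩))
  have hsmall : #(Icc (D + 1) N) * M * ∑ l ∈ Icc 1 D, 1 / I l < (D : ℝ) ^ 2 := by
    rw [Nat.card_Icc, Nat.add_sub_add_right, Nat.cast_sub hDN.le, mul_assoc, mul_comm]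
    exact (lt_div_iff₀ (by simpa using hDN)).1 hmax
  obtain ⟨C, hC, hcoer⟩ := exists_pos_mul_le_tForm _ _ (by exact_mod_cast hD) hM
    (fun i hi => hI i (hU i hi)) hsmall
  refine ⟨C, hC, fun g hg => ?_⟩
  rw [← Set.uIcc_of_le hL.le] at hkc hg
  have hκ i (hi : i ∈ Icc 1 D ∪ Icc (D + 1) N) :
      ContinuousOn (fun x => |k i x|) (Set.uIcc 0 L) := (hkc i (hU i hi)).abs
  have key := mul_add_integral_sq_le_integral_tForm (d := D) (κ := fun l x => |k l x|) (f := g)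
    hL.le hκ (fun i hi => hg i (hU i hi)) fun x hx => hcoer _ _
      (fun i hi => (hbound i (hU i hi) x hx).1)
      (fun l hl => (hbound l (hU l (Finset.mem_union_right _ hl)) x hx).2.trans (le_sup' S hl))
  rw [integral_tForm D hκ fun i hi => hg i (hU i hi)] at key
  rwa [Nat.sum_Icc_one_eq_add _ hDN.le, Nat.sum_Icc_one_eq_add _ hDN.le]
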